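/- Let a, w₃, c₃, β, L, m, v_b be real numbers with a > 0, L > 0, w₃ > 0, m > 0, v_b > 0. Define the 2×2 complex matrices C⁰ = a·[[1,−1],[−1,1]] and C¹ = −(i w₃ L²/2)·[[1,1],[1,1]] + i β·[[0,1],[−1,0]] − (i w₃ c₃²/(2L²))·[[1,−1],[−1,1]], and for ω ∈ ℂ and δ > 0 set p(ω, δ) = det(δ C⁰ + δ ω C¹ − (ω² m / v_b²)·I). Then there exist δ₀ > 0 and a function ω₂ : (0, δ₀) → ℂ such that p(ω₂(δ), δ) = 0 and Re ω₂(δ) > 0 for every δ ∈ (0, δ₀), and ω₂(δ) = √(2 δ v_b² a / m) − i δ v_b² w₃ c₃² / (2 m L²) + O(δ^{3/2}) as δ → 0⁺. -/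

import Mathlib

/-!
Writing `k = m / v_b²` and `C¹ = A J + B S + C P` with `J = [[1,1],[1,1]]`, `S = [[0,1],[−1,0]]`,
`P = [[1,−1],[−1,1]]`, the determinant factors as
`p(ω, δ) = (2δa + 2δωC − kω²)(2δωA − kω²) + (δωB)²`.
The second resonance is the perturbed root of the first factor, `ω² ≈ 2δa/k`. Put `δ = ε²` and
`ω = ε(z₀ + εw)` with `k z₀² = 2a`: then `p = ε⁵ (z₀ + εw) H(ε, w)`, `H = rescaledCharPoly`, with
`H(0, w) = 2k z₀² (kw − C)`. Since `∂_w H(0, C/k) ≠ 0`, the implicit function theorem gives a branch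
`w(ε) = C/k + O(ε)` of zeros of `H`, and `ω₂(δ) = √δ (z₀ + √δ w(√δ)) = √δ z₀ + δ C/k + O(δ^{3/2})`.
-/

open Asymptotics Topology

noncomputable section

/-- The periodic capacitance matrix `C⁰ = a [[1,−1],[−1,1]]` (Lemma 3.5 of the paper). -/
def Cmat0 (a : ℝ) : Matrix (Fin 2) (Fin 2) ℂ := (a : ℂ) • !![1, -1; -1, 1]

/-- The higher-order capacitance matrix
`C¹ = −(i w₃ L²/2)[[1,1],[1,1]] + iβ[[0,1],[−1,0]] − (i w₃ c₃²/(2L²))[[1,−1],[−1,1]]`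
(Lemma 3.6(ii) of the paper). -/
def Cmat1 (w3 c3 β L : ℝ) : Matrix (Fin 2) (Fin 2) ℂ :=
  (-(Complex.I * (w3 : ℂ) * (L : ℂ) ^ 2) / 2) • !![1, 1; 1, 1] +
    (Complex.I * (β : ℂ)) • !![0, 1; -1, 0] +
    (-(Complex.I * (w3 : ℂ) * (c3 : ℂ) ^ 2) / (2 * (L : ℂ) ^ 2)) • !![1, -1; -1, 1]

/-- The leading-order characteristic polynomial (4.2) of the quasiperiodic subwavelength
resonance problem: `p(ω, δ) = det(δ C⁰ + δ ω C¹ − (ω² m / v_b²) I)`. -/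
def charPoly (a w3 c3 β L m vb : ℝ) (ω : ℂ) (δ : ℝ) : ℂ :=
  Matrix.det ((δ : ℂ) • Cmat0 a + ((δ : ℂ) * ω) • Cmat1 w3 c3 β L -
    ((ω ^ 2 * (m : ℂ) / (vb : ℂ) ^ 2)) • (1 : Matrix (Fin 2) (Fin 2) ℂ))

open Filter

section ImplicitFunction

variable {𝕜 : Type*} [RCLike 𝕜]
  {E₁ : Type*} [NormedAddCommGroup E₁] [NormedSpace 𝕜 E₁] [CompleteSpace E₁]
  {E₂ : Type*} [NormedAddCommGroup E₂] [NormedSpace 𝕜 E₂] [CompleteSpace E₂]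
  {F : Type*} [NormedAddCommGroup F] [NormedSpace 𝕜 F] [CompleteSpace F]

theorem ContDiffAt.exists_eventually_eq_zero_isBigO {f : E₁ × E₂ → F} {u : E₁ × E₂}
    {L : E₂ →L[𝕜] F} (hf : ContDiffAt 𝕜 1 f u) (hu : f u = 0)
    (hL : HasFDerivAt (fun y => f (u.1, y)) L u.2) (hLi : L.IsInvertible) :
    ∃ ψ : E₁ → E₂, (∀ᶠ x in 𝓝 u.1, f (x, ψ x) = 0) ∧
      (fun x => ψ x - u.2) =O[𝓝 u.1] fun x => x - u.1 := by
  have hinr : fderiv 𝕜 f u ∘L .inr 𝕜 E₁ E₂ = L :=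
    (((hf.differentiableAt one_ne_zero).hasFDerivAt).comp u.2
      (hasFDerivAt_prodMk_right u.1 u.2)).unique hL
  have hi : (fderiv 𝕜 f u ∘L .inr 𝕜 E₁ E₂).IsInvertible := hinr ▸ hLi
  refine ⟨hf.implicitFunction one_ne_zero hi, ?_, ?_⟩
  · simpa [hu] using hf.eventually_apply_implicitFunction one_ne_zero hi
  · simpa [hf.implicitFunction_apply_self one_ne_zero hi] using
      (hf.hasStrictFDerivAt_implicitFunction one_ne_zero hi).hasFDerivAt.isBigO_sub

end ImplicitFunction

lemma det_capacitance (a A B C δ ω μ : ℂ) :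
    (δ • (a • !![1, -1; -1, 1]) +
        (δ * ω) • (A • !![1, 1; 1, 1] + B • !![0, 1; -1, 0] + C • !![1, -1; -1, 1]) -
        μ • (1 : Matrix (Fin 2) (Fin 2) ℂ)).det =
      (2 * δ * a + 2 * δ * ω * C - μ) * (2 * δ * ω * A - μ) + (δ * ω * B) ^ 2 := by
  simp only [Matrix.det_fin_two, Matrix.sub_apply, Matrix.add_apply, Matrix.smul_apply,
    Matrix.one_apply_eq, Matrix.one_apply_ne zero_ne_one, Matrix.one_apply_ne one_ne_zero,
    Matrix.of_apply, Matrix.cons_val', Matrix.cons_val_zero, Matrix.cons_val_one,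
    Matrix.cons_val_fin_one, smul_eq_mul]
  ring

def rescaledCharPoly (k z₀ A B C : ℂ) (p : ℂ × ℂ) : ℂ :=
  (2 * z₀ * (C - k * p.2) + p.1 * p.2 * (2 * C - k * p.2)) *
      (2 * p.1 * A - k * (z₀ + p.1 * p.2)) +
    p.1 * (z₀ + p.1 * p.2) * B ^ 2

lemma charPoly_rescaled (a w3 c3 β L m vb : ℝ) {z₀ : ℂ}
    (hz₀ : (m / vb ^ 2 : ℂ) * z₀ ^ 2 = 2 * a) {ε : ℂ} {δ : ℝ} (hδ : (δ : ℂ) = ε ^ 2) (w : ℂ) :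
    charPoly a w3 c3 β L m vb (ε * (z₀ + ε * w)) δ =
      ε ^ 5 * (z₀ + ε * w) * rescaledCharPoly (m / vb ^ 2) z₀ (-(Complex.I * w3 * L ^ 2) / 2)
        (Complex.I * β) (-(Complex.I * w3 * c3 ^ 2) / (2 * L ^ 2)) (ε, w) := by
  rw [charPoly, Cmat0, Cmat1, det_capacitance, hδ, rescaledCharPoly]
  linear_combination (-ε ^ 4 * (z₀ + ε * w) *
    (2 * ε * (-(Complex.I * w3 * L ^ 2) / 2) - (m / vb ^ 2 : ℂ) * (z₀ + ε * w))) * hz₀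

lemma contDiff_rescaledCharPoly (k z₀ A B C : ℂ) :
    ContDiff ℂ 1 (rescaledCharPoly k z₀ A B C) := by
  unfold rescaledCharPoly
  fun_prop

lemma hasDerivAt_rescaledCharPoly_zero (k z₀ A B C w : ℂ) :
    HasDerivAt (fun y => rescaledCharPoly k z₀ A B C (0, y)) (2 * k ^ 2 * z₀ ^ 2) w := by
  have h : (fun y => rescaledCharPoly k z₀ A B C (0, y)) =
      fun y => 2 * k * z₀ ^ 2 * (y * k - C) := by
    funext y
    simp only [rescaledCharPoly]
    ring
  rw [h]
  exact (((hasDerivAt_mul_const k).sub_const C).const_mul (2 * k * z₀ ^ 2)).congr_deriv (by ring)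

theorem exists_rescaledCharPoly_root (k z₀ A B C : ℂ) (hk : k ≠ 0) (hz₀ : z₀ ≠ 0) :
    ∃ ψ : ℂ → ℂ, (∀ᶠ ε in 𝓝 0, rescaledCharPoly k z₀ A B C (ε, ψ ε) = 0) ∧
      (fun ε => ψ ε - C / k) =O[𝓝 0] fun ε => ε := by
  have hroot : rescaledCharPoly k z₀ A B C (0, C / k) = 0 := by
    simp [rescaledCharPoly, mul_div_cancel₀ C hk]
  have hslope : 2 * k ^ 2 * z₀ ^ 2 ≠ 0 := by simp [hk, hz₀]
  simpa using (contDiff_rescaledCharPoly k z₀ A B C).contDiffAt.exists_eventually_eq_zero_isBigO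
    hroot (hasDerivAt_rescaledCharPoly_zero k z₀ A B C (C / k)).hasFDerivAt
    ⟨ContinuousLinearEquiv.unitsEquivAut ℂ (Units.mk0 _ hslope), by ext; simp⟩

lemma eventually_re_add_mul_pos {ψ : ℂ → ℂ} {z₀ : ℝ} {z₁ : ℂ} (hz₀ : 0 < z₀)
    (hψ : (fun e => ψ e - z₁) =O[𝓝 0] fun e => e) :
    ∀ᶠ e in 𝓝 0, 0 < ((z₀ : ℂ) + e * ψ e).re := by
  have hlim : Tendsto (fun e => (z₀ : ℂ) + e * ψ e) (𝓝 0) (𝓝 z₀) := by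
    simpa using tendsto_const_nhds.add
      (tendsto_id.mul (tendsto_sub_nhds_zero_iff.1 (hψ.trans_tendsto tendsto_id)))
  exact ((Complex.continuous_re.tendsto _).comp hlim).eventually (lt_mem_nhds hz₀)

lemma tendsto_ofReal_sqrt_nhdsGT_zero :
    Tendsto (fun δ : ℝ => ((√δ : ℝ) : ℂ)) (𝓝[>] 0) (𝓝 0) :=
  ((Complex.continuous_ofReal.comp Real.continuous_sqrt).tendsto' 0 0 (by simp)).mono_left
    nhdsWithin_le_nhds

theorem isBigO_sqrt_sq_mul {f : ℂ → ℂ} (hf : f =O[𝓝 0] fun e => e) :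
    (fun δ : ℝ => ((√δ : ℝ) : ℂ) ^ 2 * f (√δ : ℝ)) =O[𝓝[>] 0] fun δ => δ ^ ((3 : ℝ) / 2) := by
  have hcube : (fun e : ℂ => e ^ 2 * f e) =O[𝓝 0] fun e => e ^ 3 :=
    ((isBigO_refl (fun e : ℂ => e ^ 2) (𝓝 0)).mul hf).congr_right fun e => (pow_succ e 2).symm
  refine (hcube.comp_tendsto tendsto_ofReal_sqrt_nhdsGT_zero).trans
    (IsBigO.of_norm_eventuallyLE ?_)
  filter_upwards [self_mem_nhdsWithin] with δ hδ
  simp [Real.rpow_div_two_eq_sqrt 3 (le_of_lt hδ), abs_of_nonneg (Real.sqrt_nonneg δ)]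

theorem second_resonance_asymptotics_general (a w3 c3 β L m vb : ℝ)
    (ha : 0 < a) (hm : 0 < m) (hvb : 0 < vb) :
    ∃ δ₀ > (0 : ℝ), ∃ ω₂ : ℝ → ℂ,
      (∀ δ : ℝ, 0 < δ → δ < δ₀ →
        charPoly a w3 c3 β L m vb (ω₂ δ) δ = 0 ∧ 0 < (ω₂ δ).re) ∧
      (fun δ : ℝ => ω₂ δ - (((Real.sqrt (2 * δ * vb ^ 2 * a / m) : ℝ) : ℂ) -
          Complex.I * (δ : ℂ) * (vb : ℂ) ^ 2 * (w3 : ℂ) * (c3 : ℂ) ^ 2 /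
            (2 * (m : ℂ) * (L : ℂ) ^ 2)))
        =O[𝓝[>] (0 : ℝ)] (fun δ : ℝ => δ ^ ((3 : ℝ) / 2)) := by
  set z₀ : ℝ := √(2 * vb ^ 2 * a / m)
  have hz₀ : 0 < z₀ := Real.sqrt_pos.2 (by positivity)
  have hk : (m / vb ^ 2 : ℂ) * (z₀ : ℂ) ^ 2 = 2 * a := by
    norm_cast
    rw [Real.sq_sqrt (by positivity)]
    field_simp
  obtain ⟨ψ, hroot, hψ⟩ := exists_rescaledCharPoly_root (m / vb ^ 2) z₀
    (-(Complex.I * w3 * L ^ 2) / 2) (Complex.I * β)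
    (-(Complex.I * w3 * c3 ^ 2) / (2 * L ^ 2)) (by norm_cast; positivity)
    (by exact_mod_cast hz₀.ne')
  set ε : ℝ → ℂ := fun δ => ((√δ : ℝ) : ℂ)
  have hsq : ∀ δ : ℝ, 0 < δ → ε δ ^ 2 = δ := fun δ hδ => by
    simp [ε, ← Complex.ofReal_pow, Real.sq_sqrt hδ.le]
  have hgood : ∀ᶠ δ in 𝓝[>] 0, charPoly a w3 c3 β L m vb (ε δ * (z₀ + ε δ * ψ (ε δ))) δ = 0 ∧
      0 < (ε δ * (z₀ + ε δ * ψ (ε δ))).re := by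
    filter_upwards [self_mem_nhdsWithin, tendsto_ofReal_sqrt_nhdsGT_zero.eventually hroot,
      tendsto_ofReal_sqrt_nhdsGT_zero.eventually (eventually_re_add_mul_pos hz₀ hψ)]
      with δ (hδ : 0 < δ) hδroot hδpos
    refine ⟨?_, ?_⟩
    · rw [charPoly_rescaled a w3 c3 β L m vb hk (hsq δ hδ).symm, hδroot, mul_zero]
    · simpa [ε, Complex.re_ofReal_mul] using mul_pos (Real.sqrt_pos.2 hδ) hδpos
  obtain ⟨δ₀, hδ₀, hδ⟩ := (nhdsGT_basis 0).eventually_iff.1 hgood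
  refine ⟨δ₀, hδ₀, fun δ => ε δ * (z₀ + ε δ * ψ (ε δ)), fun δ h0 h1 => hδ ⟨h0, h1⟩,
    (isBigO_sqrt_sq_mul hψ).congr' ?_ EventuallyEq.rfl⟩
  -- `ω₂ δ` minus the two-term expansion is `(√δ)² (ψ √δ − C/k)`
  filter_upwards [self_mem_nhdsWithin] with δ (hδ : 0 < δ)
  have hsqrt : √(2 * δ * vb ^ 2 * a / m) = √δ * z₀ := by
    rw [← Real.sqrt_mul hδ.le]
    ring_nf
  rw [hsqrt, div_div_eq_mul_div]
  push_cast
  linear_combination (Complex.I * w3 * c3 ^ 2 * vb ^ 2 / (2 * L ^ 2 * m)) * hsq δ hδ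

/-- Second subwavelength resonant frequency (Theorem 4.3 of the paper):
`ω₂(δ) = √(2δ v_b² a/m) − i δ v_b² w₃ c₃²/(2 m L²) + O(δ^{3/2})` as `δ → 0⁺`,
with positive real part. Its imaginary part is proportional to `c₃²`, characterizing
the sharp Fano resonance. -/
theorem second_resonance_asymptotics (a w3 c3 β L m vb : ℝ)
    (ha : 0 < a) (hL : 0 < L) (hw3 : 0 < w3) (hm : 0 < m) (hvb : 0 < vb) :
    ∃ δ₀ > (0 : ℝ), ∃ ω₂ : ℝ → ℂ,
      (∀ δ : ℝ, 0 < δ → δ < δ₀ →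
        charPoly a w3 c3 β L m vb (ω₂ δ) δ = 0 ∧ 0 < (ω₂ δ).re) ∧
      (fun δ : ℝ => ω₂ δ - (((Real.sqrt (2 * δ * vb ^ 2 * a / m) : ℝ) : ℂ) -
          Complex.I * (δ : ℂ) * (vb : ℂ) ^ 2 * (w3 : ℂ) * (c3 : ℂ) ^ 2 /
            (2 * (m : ℂ) * (L : ℂ) ^ 2)))
        =O[𝓝[>] (0 : ℝ)] (fun δ : ℝ => δ ^ ((3 : ℝ) / 2)) :=
  second_resonance_asymptotics_general a w3 c3 β L m vb ha hm hvb
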